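/- arXiv:0810.4068 — 4 statements merged into one kernel-verified Lean document; each statement's English description precedes it below -/
import Mathlib

section
/- Let P be a partially ordered set and let F : P → ℝ satisfy 0 ≤ F(p) ≤ 1 for all p. Define N F : P → ℝ by (N F)(p) = 1 − inf_{q ≤ p} F(q). Then for every p ∈ P: (N F)^w(p) = 1 − inf_{q ≤ p} F^w(q). -/
/-- The weak regularization of `F : P → ℝ`:
`F^w(p) = sup_{q ≤ p} inf_{q' ≤ q} F(q')`. -/
noncomputable def wreg {P : Type*} [PartialOrder P] (F : P → ℝ) (p : P) : ℝ :=
  ⨆ q : {q : P // q ≤ p}, ⨅ q' : {q' : P // q' ≤ (q : P)}, F (q' : P)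

/-!
Since `x ↦ 1 - x` reverses order, it turns the infimum in the inner layer of `(N F)^w` into
a supremum, which gives `1 - F^w`, and then turns the outer supremum into `1 - inf F^w`.
The bounds `0 ≤ F ≤ 1` make all these infima and suprema honest ones in `ℝ`.
-/

open Set

section ConstSub

variable {ι G : Type*} [AddCommGroup G] [ConditionallyCompleteLattice G]
  [IsOrderedAddMonoid G] [Nonempty ι] {f : ι → G}

lemma ciSup_const_sub (hf : BddBelow (range f)) (a : G) : ⨆ i, (a - f i) = a - ⨅ i, f i :=
  ((OrderIso.subLeft a).map_ciInf hf).symm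

lemma ciInf_const_sub (hf : BddAbove (range f)) (a : G) : ⨅ i, (a - f i) = a - ⨆ i, f i :=
  ((OrderIso.subLeft a).map_ciSup hf).symm

end ConstSub

section WeakRegularization

variable {P : Type*} [PartialOrder P]

instance (p : P) : Nonempty {q : P // q ≤ p} := ⟨⟨p, le_rfl⟩⟩

noncomputable def infBelow (F : P → ℝ) (p : P) : ℝ :=
  ⨅ q : {q : P // q ≤ p}, F q

variable {F : P → ℝ} (hF : ∀ p, F p ∈ Icc (0 : ℝ) 1)
include hF

lemma infBelow_nonneg (p : P) : 0 ≤ infBelow F p :=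
  Real.iInf_nonneg fun q => (hF q).1

lemma infBelow_le_one (p : P) : infBelow F p ≤ 1 :=
  (ciInf_le (f := fun q : {q : P // q ≤ p} => F q)
    ⟨0, forall_mem_range.2 fun q => (hF q).1⟩ ⟨p, le_rfl⟩).trans (hF p).2

lemma bddAbove_range_infBelow (p : P) :
    BddAbove (range fun q : {q : P // q ≤ p} => infBelow F q) :=
  ⟨1, forall_mem_range.2 fun q => infBelow_le_one hF q⟩

lemma infBelow_le_wreg (p : P) : infBelow F p ≤ wreg F p :=
  le_ciSup (bddAbove_range_infBelow hF p) ⟨p, le_rfl⟩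

lemma bddBelow_range_wreg (p : P) : BddBelow (range fun q : {q : P // q ≤ p} => wreg F q) :=
  ⟨0, forall_mem_range.2 fun q => (infBelow_nonneg hF q).trans (infBelow_le_wreg hF q)⟩

end WeakRegularization

theorem stmt4 {P : Type*} [PartialOrder P] (F : P → ℝ)
    (hF : ∀ p, F p ∈ Set.Icc (0 : ℝ) 1) (p : P) :
    wreg (fun p' => 1 - ⨅ q : {q : P // q ≤ p'}, F (q : P)) p
      = 1 - ⨅ q : {q : P // q ≤ p}, wreg F (q : P) := by
  have inner (q : P) : ⨅ q' : {q' : P // q' ≤ q}, (1 - infBelow F q') = 1 - wreg F q :=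
    ciInf_const_sub (bddAbove_range_infBelow hF q) 1
  calc wreg (fun p' => 1 - infBelow F p') p
      = ⨆ q : {q : P // q ≤ p}, (1 - wreg F q) := by simp only [wreg, inner]
    _ = 1 - ⨅ q : {q : P // q ≤ p}, wreg F q := ciSup_const_sub (bddBelow_range_wreg hF p) 1
end

section
/- Let P be a partially ordered set and let F, G : P → ℝ be antitone functions taking values in [0,1] (antitone meaning q ≤ p implies F(q) ≤ F(p)). Define S : P → ℝ by S(p) = min(F(p) + G(p), 1). Then for every p ∈ P: S^w(p) = sup_{q ≤ p} inf_{q' ≤ q} min(F^w(q') + G^w(q'), 1). -/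
open Set

instance {P : Type*} [Preorder P] (q : P) : Nonempty {q' : P // q' ≤ q} :=
  ⟨⟨q, le_rfl⟩⟩

noncomputable def lowerInf {P : Type*} [Preorder P] (F : P → ℝ) (q : P) : ℝ :=
  ⨅ q' : {q' : P // q' ≤ q}, F q'

section LowerInf

variable {P : Type*} [Preorder P] {F G : P → ℝ} {q r : P}

lemma le_lowerInf {a : ℝ} (h : ∀ r ≤ q, a ≤ F r) : a ≤ lowerInf F q :=
  le_ciInf fun r => h r r.2

lemma lowerInf_le (hF : BddBelow (range F)) (h : r ≤ q) : lowerInf F q ≤ F r :=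
  ciInf_le (f := fun s : {s : P // s ≤ q} => F s)
    (hF.mono (range_comp_subset_range _ F)) ⟨r, h⟩

lemma lowerInf_le_self (hF : BddBelow (range F)) : lowerInf F q ≤ F q :=
  lowerInf_le hF le_rfl

lemma lowerInf_anti (hF : BddBelow (range F)) (h : r ≤ q) : lowerInf F q ≤ lowerInf F r :=
  le_lowerInf fun _ hs => lowerInf_le hF (hs.trans h)

lemma le_lowerInf_of_forall_le {a : ℝ} (hF : ∀ x, a ≤ F x) : a ≤ lowerInf F q :=
  le_lowerInf fun r _ => hF r

lemma lowerInf_mono (hF : BddBelow (range F)) (h : ∀ x, F x ≤ G x) :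
    lowerInf F q ≤ lowerInf G q :=
  le_lowerInf fun _ hr => (lowerInf_le hF hr).trans (h _)

lemma lowerInf_add_le (hFmono : Monotone F) (hF : BddBelow (range F))
    (hG : BddBelow (range G)) (s : P) :
    lowerInf (fun x => F x + G x) s ≤ F s + lowerInf G s := by
  have : lowerInf (fun x => F x + G x) s - F s ≤ lowerInf G s :=
    le_lowerInf fun t ht => by
      have := lowerInf_le (hF.range_add hG) ht
      linarith [hFmono ht]
  linarith

end LowerInf

section WeakRegularization

variable {P : Type*} [PartialOrder P] {F G : P → ℝ}

lemma wreg_congr {H : P → ℝ} (h : ∀ q, lowerInf F q = lowerInf H q) (p : P) :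
    wreg F p = wreg H p :=
  iSup_congr fun q => h q

lemma lowerInf_le_wreg (hFmono : Monotone F) (hF : BddBelow (range F)) {s p : P} (h : s ≤ p) :
    lowerInf F s ≤ wreg F p :=
  le_ciSup (f := fun q : {q : P // q ≤ p} => lowerInf F q)
    ⟨F p, by rintro _ ⟨q, rfl⟩; exact (lowerInf_le_self hF).trans (hFmono q.2)⟩ ⟨s, h⟩

lemma wreg_le (hFmono : Monotone F) (hF : BddBelow (range F)) (p : P) : wreg F p ≤ F p :=
  ciSup_le fun q => (lowerInf_le_self hF).trans (hFmono q.2)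

lemma bddBelow_range_wreg_s5 (hFmono : Monotone F) (hF : BddBelow (range F)) :
    BddBelow (range (wreg F)) := by
  obtain ⟨a, ha⟩ := hF
  refine ⟨a, ?_⟩
  rintro _ ⟨p, rfl⟩
  exact (le_lowerInf_of_forall_le fun x => ha ⟨x, rfl⟩).trans
    (lowerInf_le_wreg hFmono ⟨a, ha⟩ le_rfl)

lemma lowerInf_add_le_wreg_add (hFmono : Monotone F) (hF : BddBelow (range F))
    (hGmono : Monotone G) (hG : BddBelow (range G)) (r : P) :
    lowerInf (fun x => F x + G x) r ≤ wreg F r + wreg G r := by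
  have : lowerInf (fun x => F x + G x) r - wreg G r ≤ lowerInf F r :=
    le_lowerInf fun s hs => by
      have := calc
        lowerInf (fun x => F x + G x) r ≤ lowerInf (fun x => F x + G x) s :=
          lowerInf_anti (hF.range_add hG) hs
        _ ≤ F s + lowerInf G s := lowerInf_add_le hFmono hF hG s
        _ ≤ F s + wreg G r := by gcongr; exact lowerInf_le_wreg hGmono hG hs
      linarith
  linarith [lowerInf_le_wreg hFmono hF (le_refl r)]

lemma lowerInf_min_add_wreg (hFmono : Monotone F) (hF : BddBelow (range F))
    (hGmono : Monotone G) (hG : BddBelow (range G)) (c : ℝ) (q : P) :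
    lowerInf (fun x => min (F x + G x) c) q
      = lowerInf (fun x => min (wreg F x + wreg G x) c) q := by
  have hS : BddBelow (range fun x => min (F x + G x) c) :=
    (hF.range_add hG).range_comp_left fun _ _ h => min_le_min_right c h
  refine le_antisymm (le_lowerInf fun r hr => le_min ?_ ?_) (lowerInf_mono ?_ fun x => ?_)
  · calc
      lowerInf (fun x => min (F x + G x) c) q ≤ lowerInf (fun x => F x + G x) r :=
        (lowerInf_anti hS hr).trans (lowerInf_mono hS fun x => min_le_left _ _)
      _ ≤ wreg F r + wreg G r := lowerInf_add_le_wreg_add hFmono hF hGmono hG r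
  · exact (lowerInf_le hS hr).trans (min_le_right _ _)
  · exact ((bddBelow_range_wreg_s5 hFmono hF).range_add
      (bddBelow_range_wreg_s5 hGmono hG)).range_comp_left fun _ _ h => min_le_min_right c h
  · exact min_le_min_right c (add_le_add (wreg_le hFmono hF x) (wreg_le hGmono hG x))

end WeakRegularization

theorem stmt5 {P : Type*} [PartialOrder P] (F G : P → ℝ)
    (hF : ∀ p, F p ∈ Set.Icc (0 : ℝ) 1) (hG : ∀ p, G p ∈ Set.Icc (0 : ℝ) 1)
    (hFmono : ∀ q p : P, q ≤ p → F q ≤ F p) (hGmono : ∀ q p : P, q ≤ p → G q ≤ G p)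
    (p : P) :
    wreg (fun p' => min (F p' + G p') 1) p
      = ⨆ q : {q : P // q ≤ p}, ⨅ q' : {q' : P // q' ≤ (q : P)},
          min (wreg F (q' : P) + wreg G (q' : P)) 1 := by
  have hFb : BddBelow (range F) := ⟨0, by rintro _ ⟨x, rfl⟩; exact (hF x).1⟩
  have hGb : BddBelow (range G) := ⟨0, by rintro _ ⟨x, rfl⟩; exact (hG x).1⟩
  exact wreg_congr
    (lowerInf_min_add_wreg (fun _ _ => hFmono _ _) hFb (fun _ _ => hGmono _ _) hGb 1) p
end

section
/- Let P be a partially ordered set and let (F_n)_{n ∈ I} be a nonempty countable family of functions P → ℝ taking values in [0,1]. Define D : P → ℝ by D(p) = 1 − inf_{q ≤ p} inf_{n ∈ I} (1 − inf_{q' ≤ q} F_n(q')). Then for every p ∈ P: D(p) = sup_{n ∈ I} F_n^w(p). -/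
open Set Function

section ConditionallyCompleteLattice

variable {α κ ι : Type*} [ConditionallyCompleteLattice α]

theorem ciSup_le_ciSup_comm [Nonempty κ] [Nonempty ι] {f : κ → ι → α}
    (hf : BddAbove (range (uncurry f))) : ⨆ q, ⨆ n, f q n ≤ ⨆ n, ⨆ q, f q n := by
  obtain ⟨b, hb⟩ := hf
  have hcol : ∀ n, BddAbove (range fun q => f q n) :=
    fun n => ⟨b, forall_mem_range.2 fun q => hb ⟨(q, n), rfl⟩⟩
  have hsup : BddAbove (range fun n => ⨆ q, f q n) :=
    ⟨b, forall_mem_range.2 fun n => ciSup_le fun q => hb ⟨(q, n), rfl⟩⟩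
  exact ciSup_le fun q => ciSup_le fun n =>
    le_ciSup_of_le hsup n (le_ciSup (hcol n) q)

theorem ciSup_comm [Nonempty κ] [Nonempty ι] {f : κ → ι → α}
    (hf : BddAbove (range (uncurry f))) : ⨆ q, ⨆ n, f q n = ⨆ n, ⨆ q, f q n := by
  obtain ⟨b, hb⟩ := hf
  refine le_antisymm (ciSup_le_ciSup_comm ⟨b, hb⟩) (ciSup_le_ciSup_comm ?_)
  exact ⟨b, forall_mem_range.2 fun x => hb ⟨x.swap, rfl⟩⟩

variable [AddCommGroup α] [IsOrderedAddMonoid α]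

theorem sub_ciSup [Nonempty ι] (c : α) {f : ι → α} (hf : BddAbove (range f)) :
    c - ⨆ i, f i = ⨅ i, (c - f i) :=
  (OrderIso.subLeft c).map_ciSup hf

theorem sub_ciInf_ciInf_sub [Nonempty κ] [Nonempty ι] (c : α) {f : κ → ι → α}
    (hf : BddAbove (range (uncurry f))) :
    c - ⨅ q, ⨅ n, (c - f q n) = ⨆ n, ⨆ q, f q n := by
  obtain ⟨b, hb⟩ := hf
  have hrow : ∀ q, BddAbove (range (f q)) :=
    fun q => ⟨b, forall_mem_range.2 fun n => hb ⟨(q, n), rfl⟩⟩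
  have hsup : BddAbove (range fun q => ⨆ n, f q n) :=
    ⟨b, forall_mem_range.2 fun q => ciSup_le fun n => hb ⟨(q, n), rfl⟩⟩
  calc c - ⨅ q, ⨅ n, (c - f q n) = c - ⨅ q, (c - ⨆ n, f q n) := by
        simp only [sub_ciSup c (hrow _)]
    _ = ⨆ q, ⨆ n, f q n := by rw [← sub_ciSup c hsup, sub_sub_cancel]
    _ = ⨆ n, ⨆ q, f q n := ciSup_comm ⟨b, hb⟩

end ConditionallyCompleteLattice

theorem stmt7_general {P : Type*} [PartialOrder P] {ι : Type*} [Nonempty ι]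
    (F : ι → P → ℝ) (hF : ∀ n p, F n p ∈ Set.Icc (0 : ℝ) 1) (p : P) :
    (1 - ⨅ q : {q : P // q ≤ p}, ⨅ n : ι,
        (1 - ⨅ q' : {q' : P // q' ≤ (q : P)}, F n (q' : P)))
      = ⨆ n : ι, wreg (F n) p := by
  have : Nonempty {q : P // q ≤ p} := ⟨⟨p, le_rfl⟩⟩
  have hinf_le_one : ∀ n (q : P), ⨅ q' : {q' : P // q' ≤ q}, F n q' ≤ 1 := fun n q =>
    ciInf_le_of_le ⟨0, forall_mem_range.2 fun q' => (hF n q').1⟩ ⟨q, le_rfl⟩ (hF n q).2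
  exact sub_ciInf_ciInf_sub 1 ⟨1, forall_mem_range.2 fun ⟨q, n⟩ => hinf_le_one n q⟩

theorem stmt7 {P : Type*} [PartialOrder P] {ι : Type*} [Countable ι] [Nonempty ι]
    (F : ι → P → ℝ) (hF : ∀ n p, F n p ∈ Set.Icc (0 : ℝ) 1) (p : P) :
    (1 - ⨅ q : {q : P // q ≤ p}, ⨅ n : ι,
        (1 - ⨅ q' : {q' : P // q' ≤ (q : P)}, F n (q' : P)))
      = ⨆ n : ι, wreg (F n) p :=
  stmt7_general F hF p
end

section
/- Let P be a partially ordered set and let (F_n)_{n<ω} be a countable family of functions P → ℝ taking values in [0,1]. Then every p ∈ P belongs to some nonempty subset G ⊆ P which is downward directed, upward closed, and generic for every F_n, i.e., for every n and every real r > 1 there exists q ∈ G with F_n(q) + (1 − inf_{q' ≤ q} F_n(q')) < r. -/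
/-!
Call `q` *`ε`-generic for `f`* when `f q` is within `ε` of the infimum of `f` below `q`. Such
conditions are dense: below any `p`, pick `q` with `f q` within `ε` of the infimum below `p`; the
infimum below `q` can only be larger. The Rasiowa–Sikorski lemma, applied to these countably many
dense sets (one for each `F n` and each `ε = 1 / (k + 1)`), yields the required filter through `p`.
-/

open Order OrderDual

namespace Order

/-- Rasiowa–Sikorski lemma for filters. -/
theorem exists_pFilter_meets_of_isCoinitial {P ι : Type*} [Preorder P] [Encodable ι]
    (D : ι → Set P) (hD : ∀ i, IsCoinitial (D i)) (p : P) :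
    ∃ G : PFilter P, p ∈ G ∧ ∀ i, ∃ q ∈ D i, q ∈ G :=
  let 𝒟 : ι → Cofinal Pᵒᵈ := fun i => ⟨ofDual ⁻¹' D i, hD i⟩
  ⟨⟨idealOfCofinals (toDual p) 𝒟⟩, mem_idealOfCofinals (toDual p) 𝒟,
    cofinal_meets_idealOfCofinals (toDual p) 𝒟⟩

end Order

section InfimumBelow

variable {P : Type*} [Preorder P] {f : P → ℝ}

theorem iInf_below_le_iInf_below (hf : BddBelow (Set.range f)) {p q : P} (hqp : q ≤ p) :
    ⨅ x : {x : P // x ≤ p}, f x ≤ ⨅ x : {x : P // x ≤ q}, f x :=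
  have : Nonempty {x : P // x ≤ q} := ⟨⟨q, le_rfl⟩⟩
  le_ciInf fun x => ciInf_le (f := fun y : {y : P // y ≤ p} => f y)
    (hf.mono (Set.range_comp_subset_range _ f)) ⟨x, x.2.trans hqp⟩

theorem isCoinitial_setOf_sub_iInf_lt (hf : BddBelow (Set.range f)) {ε : ℝ} (hε : 0 < ε) :
    IsCoinitial {q : P | f q - ⨅ x : {x : P // x ≤ q}, f x < ε} := by
  intro p
  have : Nonempty {x : P // x ≤ p} := ⟨⟨p, le_rfl⟩⟩
  obtain ⟨⟨q, hqp⟩, hq⟩ := exists_lt_of_ciInf_lt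
    (lt_add_of_pos_right (⨅ x : {x : P // x ≤ p}, f x) hε)
  have hinf := iInf_below_le_iInf_below hf hqp
  exact ⟨q, show f q - _ < ε by linarith, hqp⟩

end InfimumBelow

theorem stmt8 {P : Type*} [PartialOrder P] (F : ℕ → P → ℝ)
    (hF : ∀ n p, F n p ∈ Set.Icc (0 : ℝ) 1) (p : P) :
    ∃ G : Set P, p ∈ G ∧ G.Nonempty ∧
      (∀ a ∈ G, ∀ b ∈ G, ∃ c ∈ G, c ≤ a ∧ c ≤ b) ∧
      (∀ a ∈ G, ∀ b : P, a ≤ b → b ∈ G) ∧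
      (∀ n : ℕ, ∀ r : ℝ, 1 < r →
        ∃ q ∈ G, F n q + (1 - ⨅ q' : {q' : P // q' ≤ q}, F n (q' : P)) < r) := by
  have hbdd (n : ℕ) : BddBelow (Set.range (F n)) := ⟨0, by rintro _ ⟨q, rfl⟩; exact (hF n q).1⟩
  obtain ⟨G, hpG, hmeet⟩ := exists_pFilter_meets_of_isCoinitial
    (fun i : ℕ × ℕ => {q : P | F i.1 q - ⨅ x : {x : P // x ≤ q}, F i.1 x < 1 / (i.2 + 1)})
    (fun i => isCoinitial_setOf_sub_iInf_lt (hbdd i.1) Nat.one_div_pos_of_nat) p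
  refine ⟨G, hpG, G.nonempty, G.directed, fun a ha b hab => PFilter.mem_of_le hab ha, ?_⟩
  intro n r hr
  obtain ⟨k, hk⟩ := exists_nat_one_div_lt (sub_pos.mpr hr)
  obtain ⟨q, hq, hqG⟩ := hmeet (n, k)
  exact ⟨q, hqG, by simp only [Set.mem_ofPred_eq] at hq; linarith⟩
end
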